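/- arXiv:math/9907183 — 4 statements merged into one kernel-verified Lean document; each statement's English description precedes it below -/
import Mathlib

section
/- The map π ↦ α(π), sending a partition to the partition of its angle lengths α_i = π_i + π'_i − 2i + 1, is a bijection between the set of partitions of n all of whose successive ranks lie in {0,1} and the set of partitions of n whose successive parts differ by at least 2. -/
/-- The conjugate partition: `conj π i = #{j ≥ 1 : π j ≥ i}`. -/
noncomputable def conj (π : ℕ → ℕ) (i : ℕ) : ℕ := {j : ℕ | 1 ≤ j ∧ i ≤ π j}.ncard

/-- A partition, as a function from part indices (starting at 1) to part sizes:
nonincreasing on indices ≥ 1, eventually zero, with the unused index 0 set to 0. -/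
def IsPartition (π : ℕ → ℕ) : Prop :=
  π 0 = 0 ∧ (∀ i j, 1 ≤ i → i ≤ j → π j ≤ π i) ∧ ∃ N, ∀ j, N ≤ j → π j = 0

/-- The number partitioned, i.e. the sum of all parts. -/
noncomputable def size (π : ℕ → ℕ) : ℕ := ∑' j, π j

/-- The Durfee square size: the largest `d` with `π d ≥ d`. -/
noncomputable def durfee (π : ℕ → ℕ) : ℕ := sSup {d : ℕ | d ≤ π d}

/-- The number of parts. -/
noncomputable def len (π : ℕ → ℕ) : ℕ := conj π 1

/-- The `i`-th successive rank `r_i = π_i - π'_i`. -/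
noncomputable def rank (π : ℕ → ℕ) (i : ℕ) : ℤ := (π i : ℤ) - (conj π i : ℤ)

/-- The `i`-th angle (hook) length `α_i = π_i + π'_i - 2 i + 1`, as an integer. -/
noncomputable def ang (π : ℕ → ℕ) (i : ℕ) : ℤ := (π i : ℤ) + (conj π i : ℤ) - 2 * i + 1

/-- The partition `α(π)` of angle lengths: `α_i = π_i + π'_i - 2 i + 1` for `1 ≤ i ≤ d(π)`,
and `0` outside that range. -/
noncomputable def angPart (π : ℕ → ℕ) (i : ℕ) : ℕ :=
  if 1 ≤ i ∧ i ≤ durfee π then π i + conj π i + 1 - 2 * i else 0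

/-!
On its Durfee square (`1 ≤ i ≤ d`) a partition has `π i ≥ d` and `π' i ≥ d`, while beyond it `π j`
is the number of `i ≤ d` with `π' i ≥ j`. So a partition is determined by the rows and columns
`(π i, π' i)_{i ≤ d}`, and any weakly decreasing such data with `π d, π' d ≥ d` occur; counting
cells gives `|π| = Σ_{i ≤ d} α i`. All ranks lie in `{0, 1}` exactly when `π i` and `π' i` are
`α i + 2 i - 1` halved and rounded up and down, so `α` is injective; and these halves are weakly
decreasing when consecutive `α i` differ by at least `2`, which inverts `α`.
-/

open Finset

theorem Set.Finite.eq_Icc_one_ncard {S : Set ℕ} (hS : S.Finite) (h0 : 0 ∉ S)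
    (hdown : ∀ ⦃i j⦄, 1 ≤ i → i ≤ j → j ∈ S → i ∈ S) : S = Set.Icc 1 S.ncard := by
  obtain rfl | hne := S.eq_empty_or_nonempty
  · simp
  have hIcc : S = Set.Icc 1 (sSup S) := by
    ext j
    refine ⟨fun hj => ⟨Nat.one_le_iff_ne_zero.2 ?_, le_csSup hS.bddAbove hj⟩,
      fun hj => hdown hj.1 hj.2 (Nat.sSup_mem hne hS.bddAbove)⟩
    rintro rfl
    exact h0 hj
  conv_rhs => rw [hIcc, Set.ncard_Icc_nat, Nat.add_sub_cancel]
  exact hIcc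

theorem conj_eq_of_forall_iff {π : ℕ → ℕ} {i m : ℕ} (h : ∀ j, 1 ≤ j → (i ≤ π j ↔ j ≤ m)) :
    conj π i = m := by
  rw [conj, show {j | 1 ≤ j ∧ i ≤ π j} = Set.Icc 1 m from
    Set.ext fun j => and_congr_right (h j), Set.ncard_Icc_nat, Nat.add_sub_cancel]

theorem rank_mem_zero_one_iff {π : ℕ → ℕ} {i : ℕ} : rank π i ∈ ({0, 1} : Set ℤ) ↔
    π i = (π i + conj π i + 1) / 2 ∧ conj π i = (π i + conj π i) / 2 := by
  simp only [rank, Set.mem_insert_iff, Set.mem_singleton_iff]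
  omega

theorem size_eq_sum_Icc {f : ℕ → ℕ} {M : ℕ} (h0 : f 0 = 0) (hM : ∀ j, M < j → f j = 0) :
    size f = ∑ j ∈ Icc 1 M, f j := by
  refine tsum_eq_sum fun j hj => ?_
  obtain rfl | hj0 := Nat.eq_zero_or_pos j
  · exact h0
  · exact hM j (by simp only [mem_Icc, not_and, not_le] at hj; exact hj hj0)

theorem sum_Icc_two_mul_sub_one (d : ℕ) : ∑ i ∈ Icc 1 d, (2 * (i : ℤ) - 1) = d * d := by
  induction d with
  | zero => simp
  | succ d ih => rw [sum_Icc_succ_top (by omega), ih]; push_cast; ring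

theorem AntitoneOn.le_card_filter_iff {q : ℕ → ℕ} {d i j : ℕ} (hq : AntitoneOn q (Set.Icc 1 d))
    (hi : 1 ≤ i) (hid : i ≤ d) : i ≤ #{x ∈ Icc 1 d | j ≤ q x} ↔ j ≤ q i := by
  constructor
  · intro hle
    by_contra! hlt
    have hsub : {x ∈ Icc 1 d | j ≤ q x} ⊆ Ico 1 i := by
      intro x hx
      simp only [mem_filter, mem_Icc] at hx
      refine mem_Ico.2 ⟨hx.1.1, ?_⟩
      by_contra! hix
      exact absurd (hq ⟨hi, hid⟩ hx.1 hix) (by omega)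
    have := card_le_card hsub
    rw [Nat.card_Ico] at this
    omega
  · intro hj
    have hsub : Icc 1 i ⊆ {x ∈ Icc 1 d | j ≤ q x} := by
      intro x hx
      simp only [mem_Icc] at hx
      exact mem_filter.2 ⟨mem_Icc.2 ⟨hx.1, by omega⟩, hj.trans (hq ⟨hx.1, by omega⟩ ⟨hi, hid⟩ hx.2)⟩
    simpa using card_le_card hsub

namespace IsPartition

variable {π : ℕ → ℕ} {d i j k : ℕ}

protected theorem of_add_one_le {N : ℕ} (h0 : π 0 = 0) (hπ : ∀ i, 1 ≤ i → π (i + 1) ≤ π i)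
    (hN : ∀ j, N ≤ j → π j = 0) : IsPartition π :=
  ⟨h0, fun _ _ hi hij => antitoneOn_of_add_one_le Set.ordConnected_Ici
    (fun a _ ha _ => hπ a ha) (Set.mem_Ici.2 hi) (Set.mem_Ici.2 (hi.trans hij)) hij, N, hN⟩

theorem setOf_le_apply_eq_Icc (h : IsPartition π) (hk : 1 ≤ k) :
    {j | 1 ≤ j ∧ k ≤ π j} = Set.Icc 1 (conj π k) := by
  obtain ⟨N, hN⟩ := h.2.2
  have hfin : {j | 1 ≤ j ∧ k ≤ π j}.Finite := (Set.finite_Iio N).subset fun j hj => by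
    by_contra! hNj
    have := hN j (not_lt.1 hNj)
    have := hj.2
    omega
  exact hfin.eq_Icc_one_ncard (by simp) fun i j hi hij hj => ⟨hi, hj.2.trans (h.2.1 i j hi hij)⟩

theorem le_conj_iff (h : IsPartition π) (hi : 1 ≤ i) (hk : 1 ≤ k) :
    i ≤ conj π k ↔ k ≤ π i := by
  have := Set.ext_iff.1 (h.setOf_le_apply_eq_Icc hk) i
  simp only [Set.mem_ofPred_eq, Set.mem_Icc, hi, true_and] at this
  exact this.symm

theorem conj_le_conj (h : IsPartition π) (hi : 1 ≤ i) (hij : i ≤ j) : conj π j ≤ conj π i := by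
  obtain h0 | hpos := Nat.eq_zero_or_pos (conj π j)
  · omega
  · exact (h.le_conj_iff hpos hi).2 (hij.trans ((h.le_conj_iff hpos (hi.trans hij)).1 le_rfl))

theorem conj_conj (h : IsPartition π) (hj : 1 ≤ j) : conj (conj π) j = π j :=
  conj_eq_of_forall_iff fun _ hi => h.le_conj_iff hj hi

theorem bddAbove_setOf_le_apply (h : IsPartition π) : BddAbove {d | d ≤ π d} := by
  obtain ⟨N, hN⟩ := h.2.2
  refine ⟨N, fun d (hd : d ≤ π d) => ?_⟩
  by_contra! hNd
  have := hN d hNd.le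
  omega

theorem durfee_le_apply_durfee (h : IsPartition π) : durfee π ≤ π (durfee π) :=
  Nat.sSup_mem (s := {d | d ≤ π d}) ⟨0, Nat.zero_le _⟩ h.bddAbove_setOf_le_apply

theorem le_durfee (h : IsPartition π) (hd : d ≤ π d) : d ≤ durfee π :=
  le_csSup h.bddAbove_setOf_le_apply hd

theorem durfee_le_apply (h : IsPartition π) (hi : 1 ≤ i) (hid : i ≤ durfee π) :
    durfee π ≤ π i :=
  h.durfee_le_apply_durfee.trans (h.2.1 i _ hi hid)

theorem durfee_le_conj (h : IsPartition π) (hi : 1 ≤ i) (hid : i ≤ durfee π) :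
    durfee π ≤ conj π i :=
  (h.le_conj_iff (hi.trans hid) hi).2 (hid.trans h.durfee_le_apply_durfee)

theorem apply_le_durfee (h : IsPartition π) (hj : durfee π < j) : π j ≤ durfee π := by
  by_contra! hlt
  have := h.le_durfee (d := durfee π + 1) (hlt.trans_le (h.2.1 _ j (by omega) hj))
  omega

theorem conj_le_durfee (h : IsPartition π) (hi : durfee π < i) : conj π i ≤ durfee π := by
  by_contra! hlt
  have := (h.le_conj_iff (by omega) (by omega)).1 hlt
  have := h.apply_le_durfee (Nat.lt_succ_self (durfee π))
  omega

theorem apply_eq_card_filter (h : IsPartition π) (hj : durfee π < j) :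
    π j = #{i ∈ Icc 1 (durfee π) | j ≤ conj π i} := by
  rw [← h.conj_conj (by omega : 1 ≤ j), conj, ← Set.ncard_coe_finset]
  congr 1
  ext i
  simp only [Set.mem_ofPred_eq, coe_filter, mem_Icc]
  constructor
  · rintro ⟨hi, hji⟩
    refine ⟨⟨hi, ?_⟩, hji⟩
    by_contra! hdi
    have := h.conj_le_durfee hdi
    omega
  · rintro ⟨⟨hi, -⟩, hji⟩
    exact ⟨hi, hji⟩

theorem ext_of_durfee_eq {τ : ℕ → ℕ} (hπ : IsPartition π) (hτ : IsPartition τ)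
    (hd : durfee π = durfee τ) (happ : ∀ i, 1 ≤ i → i ≤ durfee π → π i = τ i)
    (hconj : ∀ i, 1 ≤ i → i ≤ durfee π → conj π i = conj τ i) : π = τ := by
  funext j
  obtain rfl | hj := Nat.eq_zero_or_pos j
  · rw [hπ.1, hτ.1]
  obtain hjd | hdj := le_or_gt j (durfee π)
  · exact happ j hj hjd
  rw [hπ.apply_eq_card_filter hdj, hτ.apply_eq_card_filter (hd ▸ hdj), ← hd]
  congr 1
  exact filter_congr fun i hi => by rw [hconj i (mem_Icc.1 hi).1 (mem_Icc.1 hi).2]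

/-- The cells right of the Durfee square are counted column by column, giving
`Σ_{i ≤ d} (π' i - d)`. -/
theorem size_eq_sum_ang (h : IsPartition π) :
    (size π : ℤ) = ∑ i ∈ Icc 1 (durfee π), ang π i := by
  set d := durfee π
  obtain ⟨N, hN⟩ := h.2.2
  set M := N + d
  have hM : ∀ j, M < j → π j = 0 := fun j hj => hN j (by omega)
  have hconjM : ∀ i, 1 ≤ i → conj π i ≤ M := fun i hi => by
    by_contra! hlt
    have := (h.le_conj_iff (i := M + 1) (by omega) hi).1 hlt
    have := hM (M + 1) (by omega)
    omega
  have hsplit : size π = ∑ j ∈ Icc 1 d, π j + ∑ j ∈ Ioc d M, π j := by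
    have hIoc : ∀ n, Icc 1 n = Ioc 0 n := fun n => Icc_add_one_left_eq_Ioc 0 n
    rw [size_eq_sum_Icc h.1 hM, hIoc, hIoc, sum_Ioc_consecutive _ (Nat.zero_le d) (by omega)]
  have htail : ∑ j ∈ Ioc d M, π j = ∑ i ∈ Icc 1 d, (conj π i - d) := by
    calc ∑ j ∈ Ioc d M, π j = ∑ j ∈ Ioc d M, #{i ∈ Icc 1 d | j ≤ conj π i} :=
          sum_congr rfl fun j hj => h.apply_eq_card_filter (mem_Ioc.1 hj).1
      _ = ∑ i ∈ Icc 1 d, #{j ∈ Ioc d M | j ≤ conj π i} :=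
          sum_card_bipartiteAbove_eq_sum_card_bipartiteBelow (fun j i => j ≤ conj π i)
      _ = ∑ i ∈ Icc 1 d, (conj π i - d) := sum_congr rfl fun i hi => by
          have hi' := mem_Icc.1 hi
          rw [show {j ∈ Ioc d M | j ≤ conj π i} = Ioc d (conj π i) by
            ext j; simp only [mem_filter, mem_Ioc]; have := hconjM i hi'.1; omega, Nat.card_Ioc]
  have hcast : ((∑ i ∈ Icc 1 d, (conj π i - d) : ℕ) : ℤ) = ∑ i ∈ Icc 1 d, ((conj π i : ℤ) - d) := by
    push_cast
    exact sum_congr rfl fun i hi =>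
      Nat.cast_sub (h.durfee_le_conj (mem_Icc.1 hi).1 (mem_Icc.1 hi).2)
  have hodd := sum_Icc_two_mul_sub_one d
  rw [hsplit, htail, Nat.cast_add, hcast]
  simp only [ang, sum_add_distrib, sum_sub_distrib, Nat.cast_sum, sum_const, Nat.card_Icc,
    nsmul_eq_mul] at hodd ⊢
  push_cast at hodd ⊢
  linarith

theorem cast_angPart (h : IsPartition π) (hi : 1 ≤ i) (hid : i ≤ durfee π) :
    (angPart π i : ℤ) = ang π i := by
  have := h.durfee_le_apply hi hid
  have := h.durfee_le_conj hi hid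
  rw [angPart, if_pos ⟨hi, hid⟩, ang]
  omega

theorem one_le_angPart_iff (h : IsPartition π) (hi : 1 ≤ i) : 1 ≤ angPart π i ↔ i ≤ durfee π := by
  refine ⟨fun hpos => ?_, fun hid => ?_⟩
  · by_contra! hdi
    rw [angPart, if_neg (by omega)] at hpos
    omega
  · have := h.durfee_le_apply hi hid
    have := h.durfee_le_conj hi hid
    rw [angPart, if_pos ⟨hi, hid⟩]
    omega

theorem angPart_add_two_le (h : IsPartition π) (hi : 1 ≤ i) (hid : i + 1 ≤ durfee π) :
    angPart π (i + 1) + 2 ≤ angPart π i := by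
  have := h.cast_angPart hi (by omega)
  have := h.cast_angPart (by omega) hid
  have := h.2.1 i (i + 1) hi (by omega)
  have := h.conj_le_conj hi (by omega : i ≤ i + 1)
  simp only [ang] at *
  omega

theorem isPartition_angPart (h : IsPartition π) : IsPartition (angPart π) := by
  refine IsPartition.of_add_one_le (N := durfee π + 1) (by simp [angPart]) (fun i hi => ?_)
    fun j hj => if_neg (by omega)
  by_cases hid : i + 1 ≤ durfee π
  · have := h.angPart_add_two_le hi hid
    omega
  · rw [angPart, if_neg (by omega)]
    exact Nat.zero_le _

theorem len_angPart (h : IsPartition π) : len (angPart π) = durfee π :=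
  conj_eq_of_forall_iff fun _ hj => h.one_le_angPart_iff hj

theorem size_angPart (h : IsPartition π) : size (angPart π) = size π := by
  have hzero : ∀ j, durfee π < j → angPart π j = 0 := fun j hj => if_neg (by omega)
  zify
  rw [size_eq_sum_Icc (by simp [angPart]) hzero, h.size_eq_sum_ang, Nat.cast_sum]
  exact sum_congr rfl fun i hi => h.cast_angPart (mem_Icc.1 hi).1 (mem_Icc.1 hi).2

end IsPartition

theorem injOn_angPart : Set.InjOn angPart
    {π | IsPartition π ∧ ∀ i, 1 ≤ i → i ≤ durfee π → rank π i ∈ ({0, 1} : Set ℤ)} := by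
  rintro π ⟨hπ, hrπ⟩ τ ⟨hτ, hrτ⟩ heq
  have hd : durfee π = durfee τ := by rw [← hπ.len_angPart, heq, hτ.len_angPart]
  have hsum : ∀ i, 1 ≤ i → i ≤ durfee π → π i + conj π i = τ i + conj τ i := fun i hi hid => by
    have := hπ.cast_angPart hi hid
    have := hτ.cast_angPart hi (hd ▸ hid)
    rw [heq] at *
    simp only [ang] at *
    omega
  have hparts : ∀ i, 1 ≤ i → i ≤ durfee π → π i = τ i ∧ conj π i = conj τ i := fun i hi hid => by
    have := rank_mem_zero_one_iff.1 (hrπ i hi hid)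
    have := rank_mem_zero_one_iff.1 (hrτ i hi (hd ▸ hid))
    have := hsum i hi hid
    omega
  exact hπ.ext_of_durfee_eq hτ hd (fun i hi hid => (hparts i hi hid).1)
    fun i hi hid => (hparts i hi hid).2

/-- The partition whose Durfee square has side `d`, with row lengths `p i` and column lengths
`q i` for `1 ≤ i ≤ d`. -/
def ofFrobenius (d : ℕ) (p q : ℕ → ℕ) (j : ℕ) : ℕ :=
  if j = 0 then 0 else if j ≤ d then p j else #{i ∈ Icc 1 d | j ≤ q i}

section ofFrobenius

variable {d i j : ℕ} {p q : ℕ → ℕ}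

theorem ofFrobenius_of_le (hj : 1 ≤ j) (hjd : j ≤ d) : ofFrobenius d p q j = p j := by
  rw [ofFrobenius, if_neg (by omega), if_pos hjd]

theorem ofFrobenius_of_lt (hdj : d < j) : ofFrobenius d p q j = #{i ∈ Icc 1 d | j ≤ q i} := by
  rw [ofFrobenius, if_neg (by omega), if_neg (by omega)]

theorem ofFrobenius_le_of_lt (hdj : d < j) : ofFrobenius d p q j ≤ d := by
  rw [ofFrobenius_of_lt hdj]
  simpa using card_filter_le (Icc 1 d) (fun i => j ≤ q i)

theorem isPartition_ofFrobenius (hp : AntitoneOn p (Set.Icc 1 d)) (hpd : d ≤ p d) :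
    IsPartition (ofFrobenius d p q) := by
  refine IsPartition.of_add_one_le (N := d + 1 + (Icc 1 d).sup q) (by simp [ofFrobenius])
    (fun i hi => ?_) fun j hj => ?_
  · obtain hid | rfl | hdi := lt_trichotomy i d
    · rw [ofFrobenius_of_le (by omega) hid, ofFrobenius_of_le hi hid.le]
      exact hp ⟨hi, hid.le⟩ ⟨by omega, hid⟩ (Nat.le_succ i)
    · rw [ofFrobenius_of_le hi le_rfl]
      exact (ofFrobenius_le_of_lt (Nat.lt_succ_self i)).trans hpd
    · rw [ofFrobenius_of_lt hdi, ofFrobenius_of_lt (by omega)]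
      exact card_le_card fun x hx => mem_filter.2 ⟨(mem_filter.1 hx).1, by
        have := (mem_filter.1 hx).2
        omega⟩
  · rw [ofFrobenius_of_lt (by omega), card_eq_zero, filter_eq_empty_iff]
    intro x hx
    have := le_sup (f := q) hx
    omega

theorem durfee_ofFrobenius (hp : AntitoneOn p (Set.Icc 1 d)) (hpd : d ≤ p d) :
    durfee (ofFrobenius d p q) = d := by
  have hπ := isPartition_ofFrobenius (q := q) hp hpd
  refine le_antisymm ?_ (hπ.le_durfee ?_)
  · by_contra! hlt
    have := hπ.durfee_le_apply_durfee
    have := ofFrobenius_le_of_lt (p := p) (q := q) hlt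
    omega
  · obtain rfl | hd := Nat.eq_zero_or_pos d
    · exact Nat.zero_le _
    · rwa [ofFrobenius_of_le hd le_rfl]

theorem conj_ofFrobenius (hp : AntitoneOn p (Set.Icc 1 d)) (hq : AntitoneOn q (Set.Icc 1 d))
    (hpd : d ≤ p d) (hqd : d ≤ q d) (hi : 1 ≤ i) (hid : i ≤ d) :
    conj (ofFrobenius d p q) i = q i := by
  refine conj_eq_of_forall_iff fun j hj => ?_
  obtain hjd | hdj := le_or_gt j d
  · have := hpd.trans (hp ⟨hj, hjd⟩ ⟨hj.trans hjd, le_rfl⟩ hjd)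
    have := hqd.trans (hq ⟨hi, hid⟩ ⟨hi.trans hid, le_rfl⟩ hid)
    rw [ofFrobenius_of_le hj hjd]
    omega
  · rw [ofFrobenius_of_lt hdj]
    exact hq.le_card_filter_iff hi hid

end ofFrobenius

theorem exists_angPart_eq {α : ℕ → ℕ} (hα : IsPartition α)
    (hgap : ∀ i, 1 ≤ i → i + 1 ≤ len α → α (i + 1) + 2 ≤ α i) :
    ∃ π, IsPartition π ∧ (∀ i, 1 ≤ i → i ≤ durfee π → rank π i ∈ ({0, 1} : Set ℤ)) ∧
      angPart π = α := by
  set d := len α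
  have hpos : ∀ i, 1 ≤ i → (1 ≤ α i ↔ i ≤ d) := fun i hi => (hα.le_conj_iff hi le_rfl).symm
  have hs : AntitoneOn (fun i => α i + 2 * i) (Set.Icc 1 d) :=
    antitoneOn_of_add_one_le Set.ordConnected_Icc fun i _ hi hi1 => by
      have := hgap i hi.1 hi1.2
      omega
  set p := fun i => (α i + 2 * i) / 2
  set q := fun i => (α i + 2 * i - 1) / 2
  have hp : AntitoneOn p (Set.Icc 1 d) := fun a ha b hb hab => Nat.div_le_div_right (hs ha hb hab)
  have hq : AntitoneOn q (Set.Icc 1 d) := fun a ha b hb hab =>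
    Nat.div_le_div_right (Nat.sub_le_sub_right (hs ha hb hab) 1)
  have hqd : d ≤ q d := by
    obtain hd | hd := Nat.eq_zero_or_pos d
    · omega
    · have := (hpos d hd).2 le_rfl
      show d ≤ (α d + 2 * d - 1) / 2
      omega
  have hpd : d ≤ p d := hqd.trans (Nat.div_le_div_right (Nat.sub_le _ _))
  have hdurfee := durfee_ofFrobenius (q := q) hp hpd
  have hcol : ∀ i, 1 ≤ i → i ≤ d → conj (ofFrobenius d p q) i = q i := fun i hi hid =>
    conj_ofFrobenius hp hq hpd hqd hi hid
  refine ⟨ofFrobenius d p q, isPartition_ofFrobenius hp hpd, fun i hi hid => ?_, funext fun j => ?_⟩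
  · rw [hdurfee] at hid
    rw [rank_mem_zero_one_iff, ofFrobenius_of_le hi hid, hcol i hi hid]
    simp only [p, q]
    omega
  · obtain rfl | hj := Nat.eq_zero_or_pos j
    · simp [angPart, hα.1]
    have := hpos j hj
    obtain hjd | hdj := le_or_gt j d
    · rw [angPart, if_pos ⟨hj, by omega⟩, ofFrobenius_of_le hj hjd, hcol j hj hjd]
      simp only [p, q]
      omega
    · rw [angPart, if_neg (by omega)]
      omega

theorem stmt5 (n : ℕ) :
    Set.BijOn angPart
      {π | IsPartition π ∧ size π = n ∧
        ∀ i, 1 ≤ i → i ≤ durfee π → rank π i ∈ ({0, 1} : Set ℤ)}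
      {α | IsPartition α ∧ size α = n ∧
        (∀ i, 1 ≤ i → i + 1 ≤ len α → α (i + 1) + 2 ≤ α i)} := by
  refine ⟨?_, ?_, ?_⟩
  · rintro π ⟨hπ, rfl, -⟩
    exact ⟨hπ.isPartition_angPart, hπ.size_angPart,
      fun i hi hil => hπ.angPart_add_two_le hi (hπ.len_angPart ▸ hil)⟩
  · rintro π ⟨hπ, -, hrπ⟩ τ ⟨hτ, -, hrτ⟩
    exact injOn_angPart ⟨hπ, hrπ⟩ ⟨hτ, hrτ⟩
  · rintro α ⟨hα, rfl, hgap⟩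
    obtain ⟨π, hπ, hrank, rfl⟩ := exists_angPart_eq hα hgap
    exact ⟨π, ⟨hπ, hπ.size_angPart.symm, hrank⟩, rfl⟩
end

section
/- Let 0 < r ≤ M/2, k = ⌊M/2⌋, and let (α, c) be a (k−1)-color partition in C_n(M,r) with parts α_1 ≥ … ≥ α_l. Define x_i = (−r + 2c(i) + α_i + 2)/2 if α_i ≡ r (mod 2) and x_i = (−r + 2c(i) + α_i + 1)/2 otherwise, and y_i = α_i − x_i + 1. Then x_1 > x_2 > … > x_l ≥ 1 and y_1 > y_2 > … > y_l ≥ 1. -/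
/-- A `t`-color partition: a partition together with a color function into `{1,…,t}`,
weakly increasing on equal parts, normalized to `0` outside the index range. -/
def IsColoredPartition (t : ℕ) (p : (ℕ → ℕ) × (ℕ → ℕ)) : Prop :=
  IsPartition p.1 ∧
  (∀ i, 1 ≤ i → i ≤ len p.1 → 1 ≤ p.2 i ∧ p.2 i ≤ t) ∧
  (∀ i, 1 ≤ i → i + 1 ≤ len p.1 → p.1 i = p.1 (i + 1) → p.2 i ≤ p.2 (i + 1)) ∧
  (∀ i, i = 0 ∨ len p.1 < i → p.2 i = 0)

/-- Conditions (i)–(iii) of the Main Theorem defining `C_n(M,r)` (with `k = ⌊M/2⌋`). -/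
def CCond (M r : ℕ) (α c : ℕ → ℕ) : Prop :=
  (∀ i, 1 ≤ i → i ≤ len α →
    if α i % 2 = r % 2 then (α i : ℤ) > |2 * (c i : ℤ) - r + 1|
    else (α i : ℤ) > |2 * (c i : ℤ) - r|) ∧
  (∀ i, 1 ≤ i → i + 1 ≤ len α →
    (α i : ℤ) - (α (i + 1) : ℤ) ≥ 2 +
      (if α i % 2 = α (i + 1) % 2 then |2 * ((c i : ℤ) - (c (i + 1) : ℤ))|
       else if α (i + 1) % 2 = r % 2 then |2 * ((c i : ℤ) - (c (i + 1) : ℤ)) - 1|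
       else |2 * ((c i : ℤ) - (c (i + 1) : ℤ)) + 1|)) ∧
  (∀ i, 1 ≤ i → i ≤ len α → M % 2 = 0 → c i = M / 2 - 1 → α i % 2 ≠ r % 2)

/-- `C_n(M,r)`: the `(k-1)`-color partitions of `n` satisfying conditions (i)–(iii). -/
def Cset (n M r : ℕ) : Set ((ℕ → ℕ) × (ℕ → ℕ)) :=
  {p | IsColoredPartition (M / 2 - 1) p ∧ size p.1 = n ∧ CCond M r p.1 p.2}

/-- The width of the `i`-th angle of the inverse image of a colored partition. -/
noncomputable def xCoord (r : ℕ) (α c : ℕ → ℕ) (i : ℕ) : ℤ :=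
  if α i % 2 = r % 2 then (-(r : ℤ) + 2 * (c i : ℤ) + (α i : ℤ) + 2) / 2
  else (-(r : ℤ) + 2 * (c i : ℤ) + (α i : ℤ) + 1) / 2

/-- The height of the `i`-th angle of the inverse image of a colored partition. -/
noncomputable def yCoord (r : ℕ) (α c : ℕ → ℕ) (i : ℕ) : ℤ :=
  (α i : ℤ) - xCoord r α c i + 1

/-!
With `δ_j = 1` if `α_j ≡ r (mod 2)` and `δ_j = 0` otherwise, and `t_j = 2c(j) − r + δ_j`, one has
`2x_j = α_j + t_j + 1` and `2y_j = α_j − t_j + 1`. Condition (i) says exactly `α_j > |t_j|`, which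
makes both positive, and condition (ii) says exactly `α_i − α_{i+1} ≥ 2 + |t_i − t_{i+1}|`, which makes
both differences positive.
-/

/-- The `δ` of the sketch above. -/
def parityShift (r a : ℕ) : ℤ := if a % 2 = r % 2 then 1 else 0

lemma two_mul_xCoord (r : ℕ) (α c : ℕ → ℕ) (i : ℕ) :
    2 * xCoord r α c i = α i + (2 * c i - r + parityShift r (α i)) + 1 := by
  unfold xCoord parityShift
  split_ifs <;> omega

lemma two_mul_yCoord (r : ℕ) (α c : ℕ → ℕ) (i : ℕ) :
    2 * yCoord r α c i = α i - (2 * c i - r + parityShift r (α i)) + 1 := by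
  rw [yCoord, mul_add, mul_sub, two_mul_xCoord]
  ring

section Coords

variable {M r : ℕ} {α c : ℕ → ℕ} {i : ℕ}

lemma CCond.abs_lt_part (h : CCond M r α c) (hi : 1 ≤ i) (hil : i ≤ len α) :
    |2 * (c i : ℤ) - r + parityShift r (α i)| < α i := by
  have h1 := h.1 i hi hil
  unfold parityShift
  split_ifs at h1 ⊢ <;> simpa using h1

lemma CCond.abs_add_two_le_sub (h : CCond M r α c) (hi : 1 ≤ i) (hil : i + 1 ≤ len α) :
    |2 * ((c i : ℤ) - c (i + 1)) + (parityShift r (α i) - parityShift r (α (i + 1)))| + 2 ≤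
      (α i : ℤ) - α (i + 1) := by
  have h2 := h.2.1 i hi hil
  unfold parityShift
  split_ifs at h2 ⊢ <;>
    first
    | omega
    | simp only [sub_self, add_zero, sub_zero, zero_sub, ← sub_eq_add_neg] at h2 ⊢; linarith

lemma CCond.one_le_coords (h : CCond M r α c) (hi : 1 ≤ i) (hil : i ≤ len α) :
    1 ≤ xCoord r α c i ∧ 1 ≤ yCoord r α c i := by
  have hbound := abs_lt.mp (h.abs_lt_part hi hil)
  have hx := two_mul_xCoord r α c i
  have hy := two_mul_yCoord r α c i
  omega

lemma CCond.coords_succ_lt (h : CCond M r α c) (hi : 1 ≤ i) (hil : i + 1 ≤ len α) :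
    xCoord r α c (i + 1) < xCoord r α c i ∧ yCoord r α c (i + 1) < yCoord r α c i := by
  have hgap := abs_le.mp (le_sub_iff_add_le.mpr (h.abs_add_two_le_sub hi hil))
  have hx := two_mul_xCoord r α c i
  have hx' := two_mul_xCoord r α c (i + 1)
  have hy := two_mul_yCoord r α c i
  have hy' := two_mul_yCoord r α c (i + 1)
  omega

end Coords

theorem stmt12_general (n M r : ℕ)
    (α c : ℕ → ℕ) (h : (α, c) ∈ Cset n M r) :
    (∀ i, 1 ≤ i → i ≤ len α → 1 ≤ xCoord r α c i ∧ 1 ≤ yCoord r α c i) ∧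
    (∀ i, 1 ≤ i → i + 1 ≤ len α →
      xCoord r α c (i + 1) < xCoord r α c i ∧ yCoord r α c (i + 1) < yCoord r α c i) :=
  ⟨fun _ hi hil => h.2.2.one_le_coords hi hil, fun _ hi hil => h.2.2.coords_succ_lt hi hil⟩

theorem stmt12 (n M r : ℕ) (hr : 0 < r) (hM : 2 * r ≤ M)
    (α c : ℕ → ℕ) (h : (α, c) ∈ Cset n M r) :
    (∀ i, 1 ≤ i → i ≤ len α → 1 ≤ xCoord r α c i ∧ 1 ≤ yCoord r α c i) ∧
    (∀ i, 1 ≤ i → i + 1 ≤ len α →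
      xCoord r α c (i + 1) < xCoord r α c i ∧ yCoord r α c (i + 1) < yCoord r α c i) :=
  stmt12_general n M r α c h
end

section
/- Let 0 < r ≤ M/2, k = ⌊M/2⌋, and (α, c) ∈ C_n(M,r). With x_i defined by x_i = (−r + 2c(i) + α_i + 2)/2 if α_i ≡ r (mod 2) and x_i = (−r + 2c(i) + α_i + 1)/2 otherwise, and y_i = α_i − x_i + 1, the rank x_i − y_i = 2x_i − α_i − 1 equals −r + 2c(i) + 1 if α_i ≡ r (mod 2) and −r + 2c(i) otherwise; in particular each x_i − y_i lies in the interval [−r+2, M−r−2]. -/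
theorem xCoord_sub_yCoord (r : ℕ) (α c : ℕ → ℕ) (i : ℕ) :
    xCoord r α c i - yCoord r α c i = 2 * xCoord r α c i - (α i : ℤ) - 1 := by
  unfold yCoord
  ring

/-- In either branch of `xCoord` the numerator is even, so the division by `2` is exact. -/
theorem two_mul_xCoord_sub_sub_one (r : ℕ) (α c : ℕ → ℕ) (i : ℕ) :
    2 * xCoord r α c i - (α i : ℤ) - 1 =
      if α i % 2 = r % 2 then -(r : ℤ) + 2 * (c i : ℤ) + 1 else -(r : ℤ) + 2 * (c i : ℤ) := by
  unfold xCoord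
  split_ifs <;> omega

/-- Only the top color `M / 2 - 1` with `M` even could push the rank past `M - r - 2`, and
condition (iii) rules that out on the parity class `α_i ≡ r`. -/
theorem colorRank_mem_Icc {M r a c : ℕ} (hc : 1 ≤ c) (hcM : c ≤ M / 2 - 1)
    (htop : M % 2 = 0 → c = M / 2 - 1 → a % 2 ≠ r % 2) :
    -(r : ℤ) + 2 ≤ (if a % 2 = r % 2 then -(r : ℤ) + 2 * c + 1 else -(r : ℤ) + 2 * c) ∧
      (if a % 2 = r % 2 then -(r : ℤ) + 2 * c + 1 else -(r : ℤ) + 2 * c) ≤ (M : ℤ) - r - 2 := by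
  split_ifs with hpar
  · have : ¬(M % 2 = 0 ∧ c = M / 2 - 1) := fun ⟨hM, hc⟩ => htop hM hc hpar
    omega
  · omega

theorem color_bounds_of_mem_Cset {n M r : ℕ} {α c : ℕ → ℕ} (h : (α, c) ∈ Cset n M r)
    {i : ℕ} (hi : 1 ≤ i) (hiα : i ≤ len α) :
    1 ≤ c i ∧ c i ≤ M / 2 - 1 ∧ (M % 2 = 0 → c i = M / 2 - 1 → α i % 2 ≠ r % 2) :=
  ⟨(h.1.2.1 i hi hiα).1, (h.1.2.1 i hi hiα).2, h.2.2.2.2 i hi hiα⟩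

theorem stmt13_general (n M r : ℕ)
    (α c : ℕ → ℕ) (h : (α, c) ∈ Cset n M r) :
    ∀ i, 1 ≤ i → i ≤ len α →
      xCoord r α c i - yCoord r α c i = 2 * xCoord r α c i - (α i : ℤ) - 1 ∧
      xCoord r α c i - yCoord r α c i =
        (if α i % 2 = r % 2 then -(r : ℤ) + 2 * (c i : ℤ) + 1
         else -(r : ℤ) + 2 * (c i : ℤ)) ∧
      -(r : ℤ) + 2 ≤ xCoord r α c i - yCoord r α c i ∧
      xCoord r α c i - yCoord r α c i ≤ (M : ℤ) - r - 2 := by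
  intro i hi hiα
  obtain ⟨hc, hcM, htop⟩ := color_bounds_of_mem_Cset h hi hiα
  have hrank := (xCoord_sub_yCoord r α c i).trans (two_mul_xCoord_sub_sub_one r α c i)
  rw [hrank]
  exact ⟨(two_mul_xCoord_sub_sub_one r α c i).symm, rfl, colorRank_mem_Icc hc hcM htop⟩

theorem stmt13 (n M r : ℕ) (hr : 0 < r) (hM : 2 * r ≤ M)
    (α c : ℕ → ℕ) (h : (α, c) ∈ Cset n M r) :
    ∀ i, 1 ≤ i → i ≤ len α →
      xCoord r α c i - yCoord r α c i = 2 * xCoord r α c i - (α i : ℤ) - 1 ∧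
      xCoord r α c i - yCoord r α c i =
        (if α i % 2 = r % 2 then -(r : ℤ) + 2 * (c i : ℤ) + 1
         else -(r : ℤ) + 2 * (c i : ℤ)) ∧
      -(r : ℤ) + 2 ≤ xCoord r α c i - yCoord r α c i ∧
      xCoord r α c i - yCoord r α c i ≤ (M : ℤ) - r - 2 :=
  stmt13_general n M r α c h
end

section
/- Let 0 < r ≤ M/2, k = ⌊M/2⌋, and (α,c) ∈ C_n(M,r) with x_i = (−r + 2c(i) + α_i + 2)/2 if α_i ≡ r (mod 2), x_i = (−r + 2c(i) + α_i + 1)/2 otherwise, and y_i = α_i − x_i + 1. The partition π whose i-th angle has x_i cells horizontally and y_i cells vertically, for i = 1, ..., l, with x_1 > … > x_l and y_1 > … > y_l, lies in A_n(M,r), and applying the map π ↦ (α(π), c_{α(π)}) recovers (α,c); hence the two maps are mutually inverse bijections between A_n(M,r) and C_n(M,r). -/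
/-- The color assigned to the `i`-th angle: `(r_i + r - 1)/2` if `α_i ≡ r (mod 2)`,
`(r_i + r)/2` otherwise (and `0` outside the range `1 ≤ i ≤ d(π)`). -/
noncomputable def colorOf (r : ℕ) (π : ℕ → ℕ) (i : ℕ) : ℕ :=
  if 1 ≤ i ∧ i ≤ durfee π then
    (if angPart π i % 2 = r % 2 then ((rank π i + r - 1) / 2).toNat
     else ((rank π i + r) / 2).toNat)
  else 0

/-- `A_n(M,r)`: partitions of `n` with all successive ranks in `[-r+2, M-r-2]`. -/
def Aset (n M r : ℕ) : Set (ℕ → ℕ) :=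
  {π | IsPartition π ∧ size π = n ∧
    ∀ i, 1 ≤ i → i ≤ durfee π → -(r : ℤ) + 2 ≤ rank π i ∧ rank π i ≤ (M : ℤ) - r - 2}

/-- The partition determined by the widths `x i` and heights `y i` of its successive
angles: `π_i = x_i + i - 1` for `i ≤ l`, and for `i > l` the `i`-th row is the number of
angles whose vertical leg reaches row `i`, i.e. `#{j ≤ l : y_j + j - 1 ≥ i}`. -/
noncomputable def invPart (x y : ℕ → ℤ) (l : ℕ) : ℕ → ℕ := fun i =>
  if 1 ≤ i ∧ i ≤ l then (x i + i - 1).toNat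
  else if i = 0 then 0
  else {j : ℕ | 1 ≤ j ∧ j ≤ l ∧ (i : ℤ) ≤ y j + j - 1}.ncard

-- foundational lemmas
section Base

lemma ncard_Icc_nat (a b : ℕ) : (Set.Icc a b).ncard = b + 1 - a := by
  rw [← Finset.coe_Icc, Set.ncard_coe_finset, Nat.card_Icc]

/-- A finite, downward-closed (within positives) set of positives is an initial segment. -/
lemma mem_iff_le_ncard (S : Set ℕ) (hfin : S.Finite)
    (h1 : ∀ j ∈ S, 1 ≤ j)
    (hdc : ∀ j ∈ S, ∀ m, 1 ≤ m → m ≤ j → m ∈ S)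
    (m : ℕ) (hm : 1 ≤ m) : m ∈ S ↔ m ≤ S.ncard := by
  constructor
  · intro hmS
    have hsub : Set.Icc 1 m ⊆ S := fun j hj => hdc m hmS j hj.1 hj.2
    have := Set.ncard_le_ncard hsub hfin
    rw [ncard_Icc_nat] at this
    omega
  · intro hle
    by_contra hmS
    have hsub : S ⊆ Set.Icc 1 (m - 1) := by
      intro j hj
      refine ⟨h1 j hj, ?_⟩
      by_contra hjm
      exact hmS (hdc j hj m hm (by omega))
    have := Set.ncard_le_ncard hsub (Set.finite_Icc _ _)
    rw [ncard_Icc_nat] at this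
    omega

lemma conj_finite_set (π : ℕ → ℕ) (hπ : IsPartition π) (i : ℕ) (hi : 1 ≤ i) :
    {j : ℕ | 1 ≤ j ∧ i ≤ π j}.Finite := by
  obtain ⟨N, hN⟩ := hπ.2.2
  apply Set.Finite.subset (Set.finite_Icc 1 N)
  rintro j ⟨hj1, hj2⟩
  refine ⟨hj1, ?_⟩
  by_contra hjN
  have := hN j (by omega)
  omega

/-- Galois connection for conjugation. -/
lemma conj_galois (π : ℕ → ℕ) (hπ : IsPartition π) (i m : ℕ) (hi : 1 ≤ i) (hm : 1 ≤ m) :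
    m ≤ conj π i ↔ i ≤ π m := by
  have key := mem_iff_le_ncard {j : ℕ | 1 ≤ j ∧ i ≤ π j} (conj_finite_set π hπ i hi)
    (fun j hj => hj.1)
    (fun j hj m' hm' hmj => ⟨hm', le_trans hj.2 (hπ.2.1 m' j hm' hmj)⟩) m hm
  rw [conj, ← key]
  simp [hm]

lemma conj_mono (π : ℕ → ℕ) (hπ : IsPartition π) (i i' : ℕ) (hi : 1 ≤ i) (hii' : i ≤ i') :
    conj π i' ≤ conj π i := by
  have hsub : {j : ℕ | 1 ≤ j ∧ i' ≤ π j} ⊆ {j : ℕ | 1 ≤ j ∧ i ≤ π j} :=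
    fun j hj => ⟨hj.1, le_trans hii' hj.2⟩
  exact Set.ncard_le_ncard hsub (conj_finite_set π hπ i hi)

/-- Parts beyond `len` vanish. -/
lemma part_eq_zero_of_len_lt (π : ℕ → ℕ) (hπ : IsPartition π) (j : ℕ) (hj : len π < j) :
    π j = 0 := by
  have hj1 : 1 ≤ j := by omega
  by_contra h
  have h1 : 1 ≤ π j := by omega
  have := (conj_galois π hπ 1 j le_rfl hj1).mpr h1
  rw [len] at hj; omega

lemma part_sum (π : ℕ → ℕ) (hπ : IsPartition π) (B : ℕ) (hB : len π ≤ B) :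
    size π = ∑ j ∈ Finset.Icc 1 B, π j := by
  rw [size]
  apply tsum_eq_sum
  intro b hb
  simp only [Finset.mem_Icc, not_and, not_le] at hb
  rcases Nat.eq_zero_or_pos b with rfl | hb1
  · exact hπ.1
  · exact part_eq_zero_of_len_lt π hπ b (by have := hb hb1; omega)

end Base
section InvPartSec

/-- Hypotheses on angle widths/heights. -/
structure Angles (x y : ℕ → ℤ) (l : ℕ) : Prop where
  hx1 : ∀ i, 1 ≤ i → i ≤ l → 1 ≤ x i
  hy1 : ∀ i, 1 ≤ i → i ≤ l → 1 ≤ y i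
  hxd : ∀ i, 1 ≤ i → i + 1 ≤ l → x (i+1) < x i
  hyd : ∀ i, 1 ≤ i → i + 1 ≤ l → y (i+1) < y i

lemma seq_mono (z : ℕ → ℤ) (l : ℕ) (hzd : ∀ i, 1 ≤ i → i + 1 ≤ l → z (i+1) < z i) :
    ∀ i j, 1 ≤ i → i ≤ j → j ≤ l → z j + (j : ℤ) ≤ z i + (i : ℤ) := by
  intro i j hi hij hjl
  induction j, hij using Nat.le_induction with
  | base => omega
  | succ j hij ih =>
    have h1 := hzd j (by omega) (by omega)
    have h2 := ih (by omega)
    push_cast at *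
    omega

lemma seq_lb (z : ℕ → ℤ) (l : ℕ) (hz1 : ∀ i, 1 ≤ i → i ≤ l → 1 ≤ z i)
    (hzd : ∀ i, 1 ≤ i → i + 1 ≤ l → z (i+1) < z i) :
    ∀ i, 1 ≤ i → i ≤ l → (l : ℤ) ≤ z i + (i : ℤ) - 1 := by
  intro i hi hil
  have := seq_mono z l hzd i l hi hil le_rfl
  have := hz1 l (by omega) le_rfl
  omega

variable {x y : ℕ → ℤ} {l : ℕ}

lemma invPart_low (h : Angles x y l) {i : ℕ} (h1 : 1 ≤ i) (h2 : i ≤ l) :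
    (invPart x y l i : ℤ) = x i + i - 1 := by
  have hlb := seq_lb x l h.hx1 h.hxd i h1 h2
  rw [invPart]
  simp only [h1, h2, and_self, if_true]
  rw [Int.toNat_of_nonneg (by omega)]

/-- The counting set used in rows below the Durfee square. -/
def cntSet (y : ℕ → ℤ) (l i : ℕ) : Set ℕ := {j : ℕ | 1 ≤ j ∧ j ≤ l ∧ (i : ℤ) ≤ y j + j - 1}

lemma cntSet_eq_coe (y : ℕ → ℤ) (l i : ℕ) :
    cntSet y l i = ((Finset.Icc 1 l).filter (fun m => (i : ℤ) ≤ y m + m - 1) : Finset ℕ) := by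
  ext j
  simp [cntSet, and_assoc]

lemma cntSet_finite (y : ℕ → ℤ) (l i : ℕ) : (cntSet y l i).Finite := by
  rw [cntSet_eq_coe]; exact Set.finite_coe_iff.mp (by infer_instance)

lemma cntSet_ncard_le (y : ℕ → ℤ) (l i : ℕ) : (cntSet y l i).ncard ≤ l := by
  rw [cntSet_eq_coe, Set.ncard_coe_finset]
  calc ((Finset.Icc 1 l).filter _).card ≤ (Finset.Icc 1 l).card := Finset.card_filter_le _ _
    _ = l := by rw [Nat.card_Icc]; omega

lemma cntSet_mem_iff (h : Angles x y l) (i : ℕ) (m : ℕ) (hm : 1 ≤ m) :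
    m ∈ cntSet y l i ↔ m ≤ (cntSet y l i).ncard := by
  apply mem_iff_le_ncard _ (cntSet_finite y l i) (fun j hj => hj.1)
  · rintro j ⟨hj1, hjl, hjy⟩ m' hm' hmj
    refine ⟨hm', by omega, ?_⟩
    have := seq_mono y l h.hyd m' j hm' hmj hjl
    omega
  · exact hm

lemma invPart_high (h : Angles x y l) {i : ℕ} (hi : l < i) :
    invPart x y l i = (cntSet y l i).ncard := by
  rw [invPart]
  have h1 : ¬(1 ≤ i ∧ i ≤ l) := by omega
  have h2 : i ≠ 0 := by omega
  simp only [h1, if_false, h2, if_false]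
  rfl

lemma invPart_zero : invPart x y l 0 = 0 := by simp [invPart]

lemma invPart_ge (h : Angles x y l) {i : ℕ} (h1 : 1 ≤ i) (h2 : i ≤ l) :
    (l : ℤ) ≤ invPart x y l i := by
  rw [invPart_low h h1 h2]
  exact seq_lb x l h.hx1 h.hxd i h1 h2

lemma invPart_mono (h : Angles x y l) :
    ∀ i j, 1 ≤ i → i ≤ j → invPart x y l j ≤ invPart x y l i := by
  intro i j hi hij
  rcases le_or_gt j l with hjl | hjl
  · -- both low
    have e1 := invPart_low h hi (le_trans hij hjl)
    have e2 := invPart_low h (le_trans hi hij) hjl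
    have := seq_mono x l h.hxd i j hi hij hjl
    omega
  · rcases le_or_gt i l with hil | hil
    · -- i low, j high
      have e1 := invPart_ge h hi hil
      rw [invPart_high h hjl]
      have := cntSet_ncard_le y l j
      omega
    · -- both high
      rw [invPart_high h hjl, invPart_high h hil]
      apply Set.ncard_le_ncard _ (cntSet_finite y l i)
      rintro m ⟨h1, h2, h3⟩
      exact ⟨h1, h2, by push_cast at *; omega⟩

lemma invPart_eventually_zero (h : Angles x y l) :
    ∀ j, (y 1).toNat + l + 1 ≤ j → invPart x y l j = 0 := by
  intro j hj
  rw [invPart_high h (by omega)]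
  convert Set.ncard_empty ℕ
  rw [Set.eq_empty_iff_forall_notMem]
  rintro m ⟨h1, h2, h3⟩
  have := seq_mono y l h.hyd 1 m le_rfl h1 h2
  have h4 : y 1 ≤ (y 1).toNat := Int.self_le_toNat _
  push_cast at *
  omega

lemma isPartition_invPart (h : Angles x y l) : IsPartition (invPart x y l) :=
  ⟨invPart_zero, invPart_mono h, ⟨(y 1).toNat + l + 1, invPart_eventually_zero h⟩⟩

lemma conj_invPart_low (h : Angles x y l) {i : ℕ} (h1 : 1 ≤ i) (h2 : i ≤ l) :
    (conj (invPart x y l) i : ℤ) = y i + i - 1 := by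
  have hlb := seq_lb y l h.hy1 h.hyd i h1 h2
  have hset : {j : ℕ | 1 ≤ j ∧ i ≤ invPart x y l j} = Set.Icc 1 (y i + i - 1).toNat := by
    ext j
    simp only [Set.mem_setOf_eq, Set.mem_Icc]
    constructor
    · rintro ⟨hj1, hji⟩
      refine ⟨hj1, ?_⟩
      rcases le_or_gt j l with hjl | hjl
      · -- j ≤ l ≤ g i, ok
        omega
      · rw [invPart_high h hjl] at hji
        have := (cntSet_mem_iff h j i h1).mpr (le_trans hji (le_refl _))
        obtain ⟨_, _, hyi⟩ := this
        omega
    · rintro ⟨hj1, hji⟩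
      refine ⟨hj1, ?_⟩
      rcases le_or_gt j l with hjl | hjl
      · have := invPart_ge h hj1 hjl
        omega
      · rw [invPart_high h hjl]
        rw [← cntSet_mem_iff h j i h1]
        exact ⟨h1, h2, by omega⟩
  rw [conj, hset, ncard_Icc_nat]
  omega

lemma durfee_eq (π : ℕ → ℕ) (d : ℕ) (h1 : d ≤ π d) (h2 : ∀ e, e ≤ π e → e ≤ d) :
    durfee π = d := by
  rw [durfee]
  apply le_antisymm
  · exact csSup_le ⟨d, h1⟩ h2
  · exact le_csSup ⟨d, fun e he => h2 e he⟩ h1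

lemma durfee_invPart (h : Angles x y l) : durfee (invPart x y l) = l := by
  apply durfee_eq
  · rcases Nat.eq_zero_or_pos l with rfl | hl
    · simp [invPart_zero]
    · have := invPart_ge h hl le_rfl
      omega
  · intro e he
    by_contra hc
    push_neg at hc
    rw [invPart_high h hc] at he
    have := cntSet_ncard_le y l e
    omega

end InvPartSec
section SizeSec
variable {x y : ℕ → ℤ} {l : ℕ}

lemma len_invPart_le (h : Angles x y l) : len (invPart x y l) ≤ (y 1).toNat + l := by
  rcases Nat.eq_zero_or_pos l with rfl | hl
  · rw [len, conj]
    have : {j : ℕ | 1 ≤ j ∧ 1 ≤ invPart x y 0 j} = ∅ := by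
      rw [Set.eq_empty_iff_forall_notMem]
      rintro j ⟨hj1, hj2⟩
      rw [invPart_high h (by omega)] at hj2
      have hle := cntSet_ncard_le y 0 j
      omega
    rw [this]; simp
  · have := conj_invPart_low h (i := 1) le_rfl hl
    rw [len]
    have h4 : y 1 ≤ (y 1).toNat := Int.self_le_toNat _
    omega

lemma sum_centering (l : ℕ) : (∑ m ∈ Finset.Icc 1 l, (2 * (m : ℤ) - 1 - l)) = 0 := by
  have h : ∀ n : ℕ, (∑ m ∈ Finset.Icc 1 n, (2 * (m : ℤ) - 1)) = n * n := by
    intro n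
    induction n with
    | zero => simp
    | succ n ih =>
      rw [Finset.sum_Icc_succ_top (by omega), ih]
      push_cast
      ring
  rw [Finset.sum_sub_distrib, h, Finset.sum_const, Nat.card_Icc, Nat.add_sub_cancel]
  push_cast
  ring

lemma size_invPart (h : Angles x y l) :
    (size (invPart x y l) : ℤ) = ∑ m ∈ Finset.Icc 1 l, (x m + y m - 1) := by
  set B := (y 1).toNat + l with hB
  have hsum := part_sum (invPart x y l) (isPartition_invPart h) B (len_invPart_le h)
  -- split Icc 1 B = Icc 1 l ∪ Ioc l B
  have hsplit : ∑ j ∈ Finset.Icc 1 B, invPart x y l j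
      = (∑ j ∈ Finset.Icc 1 l, invPart x y l j) + ∑ j ∈ Finset.Ioc l B, invPart x y l j := by
    have e : ∀ n : ℕ, Finset.Icc 1 n = Finset.Ioc 0 n := by
      intro n; ext j; simp only [Finset.mem_Icc, Finset.mem_Ioc]; omega
    rw [e, e, Finset.sum_Ioc_consecutive _ (by omega) (by omega)]
  have h1 : (∑ j ∈ Finset.Icc 1 l, (invPart x y l j : ℤ)) = ∑ j ∈ Finset.Icc 1 l, (x j + j - 1) := by
    apply Finset.sum_congr rfl
    intro j hj
    simp only [Finset.mem_Icc] at hj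
    exact invPart_low h hj.1 hj.2
  have h2 : (∑ j ∈ Finset.Ioc l B, (invPart x y l j : ℤ)) = ∑ m ∈ Finset.Icc 1 l, (y m + m - 1 - l) := by
    have hcard : ∀ j ∈ Finset.Ioc l B, (invPart x y l j : ℤ)
        = ∑ m ∈ Finset.Icc 1 l, (if (j:ℤ) ≤ y m + m - 1 then (1:ℤ) else 0) := by
      intro j hj
      simp only [Finset.mem_Ioc] at hj
      rw [invPart_high h hj.1, cntSet_eq_coe, Set.ncard_coe_finset, Finset.card_filter]
      push_cast
      rfl
    rw [Finset.sum_congr rfl hcard, Finset.sum_comm]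
    apply Finset.sum_congr rfl
    intro m hm
    simp only [Finset.mem_Icc] at hm
    have hub := seq_mono y l h.hyd 1 m le_rfl hm.1 hm.2
    have hlb := seq_lb y l h.hy1 h.hyd m hm.1 hm.2
    have h4 : y 1 ≤ (y 1).toNat := Int.self_le_toNat _
    have : (∑ j ∈ Finset.Ioc l B, (if (j:ℤ) ≤ y m + m - 1 then (1:ℤ) else 0))
        = ((Finset.Ioc l B).filter (fun j : ℕ => (j:ℤ) ≤ y m + m - 1)).card := by
      rw [Finset.card_filter]; push_cast; rfl
    rw [this]
    have hfe : (Finset.Ioc l B).filter (fun j : ℕ => (j:ℤ) ≤ y m + m - 1)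
        = Finset.Ioc l (y m + m - 1).toNat := by
      ext j
      simp only [Finset.mem_filter, Finset.mem_Ioc]
      omega
    rw [hfe, Nat.card_Ioc]
    omega
  have hcast : (size (invPart x y l) : ℤ) = ∑ j ∈ Finset.Icc 1 B, (invPart x y l j : ℤ) := by
    rw [hsum]; push_cast; rfl
  rw [hcast]
  have : (∑ j ∈ Finset.Icc 1 B, (invPart x y l j : ℤ))
      = (∑ j ∈ Finset.Icc 1 l, (invPart x y l j : ℤ)) + ∑ j ∈ Finset.Ioc l B, (invPart x y l j : ℤ) := by
    exact_mod_cast congrArg (Nat.cast : ℕ → ℤ) hsplit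
  rw [this, h1, h2]
  rw [← Finset.sum_add_distrib]
  have he : ∀ j ∈ Finset.Icc 1 l, (x j + (j:ℤ) - 1) + (y j + j - 1 - l)
      = (x j + y j - 1) + (2*(j:ℤ) - 1 - l) := by
    intro j _; ring
  rw [Finset.sum_congr rfl he, Finset.sum_add_distrib, sum_centering, add_zero]

end SizeSec
section L2

lemma durfee_spec (π : ℕ → ℕ) (hπ : IsPartition π) :
    durfee π ≤ π (durfee π) ∧ ∀ e, e ≤ π e → e ≤ durfee π := by
  obtain ⟨N, hN⟩ := hπ.2.2
  have hbdd : BddAbove {d : ℕ | d ≤ π d} := by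
    refine ⟨N, fun e he => ?_⟩
    simp only [Set.mem_setOf_eq] at he
    by_contra hc
    push_neg at hc
    have := hN e (by omega)
    omega
  have hne : ({d : ℕ | d ≤ π d}).Nonempty := ⟨0, by simp⟩
  have hmem := Nat.sSup_mem hne hbdd
  exact ⟨hmem, fun e he => le_csSup hbdd he⟩

lemma partition_angles (π : ℕ → ℕ) (hπ : IsPartition π) :
    Angles (fun i => (π i : ℤ) - i + 1) (fun i => (conj π i : ℤ) - i + 1) (durfee π) := by
  obtain ⟨hd1, hd2⟩ := durfee_spec π hπ
  set d := durfee π with hd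
  have hπd : ∀ i, 1 ≤ i → i ≤ d → d ≤ π i := fun i h1 h2 =>
    le_trans hd1 (hπ.2.1 i d h1 h2)
  have hcd : ∀ i, 1 ≤ i → i ≤ d → d ≤ conj π i := by
    intro i h1 h2
    have : d ≤ conj π d := (conj_galois π hπ d d (by omega) (by omega)).mpr hd1
    exact le_trans this (conj_mono π hπ i d h1 h2)
  refine ⟨?_, ?_, ?_, ?_⟩
  · intro i h1 h2
    have := hπd i h1 h2
    omega
  · intro i h1 h2
    have := hcd i h1 h2
    omega
  · intro i h1 h2
    have := hπ.2.1 i (i+1) h1 (by omega)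
    push_cast
    omega
  · intro i h1 h2
    have := conj_mono π hπ i (i+1) h1 (by omega)
    push_cast
    omega

lemma invPart_of_partition (π : ℕ → ℕ) (hπ : IsPartition π) :
    invPart (fun i => (π i : ℤ) - i + 1) (fun i => (conj π i : ℤ) - i + 1) (durfee π) = π := by
  obtain ⟨hd1, hd2⟩ := durfee_spec π hπ
  have hang := partition_angles π hπ
  set d := durfee π with hd
  funext i
  rcases Nat.eq_zero_or_pos i with rfl | hi1
  · rw [invPart_zero, hπ.1]
  rcases le_or_gt i d with hid | hid
  · have := invPart_low hang hi1 hid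
    omega
  · rw [invPart_high hang hid]
    have hset : cntSet (fun i => (conj π i : ℤ) - i + 1) d i = Set.Icc 1 (π i) := by
      ext j
      simp only [cntSet, Set.mem_setOf_eq, Set.mem_Icc]
      constructor
      · rintro ⟨hj1, hjd, hjy⟩
        have hji : i ≤ conj π j := by omega
        exact ⟨hj1, (conj_galois π hπ j i hj1 (by omega)).mp hji⟩
      · rintro ⟨hj1, hjp⟩
        have hji : i ≤ conj π j := (conj_galois π hπ j i hj1 (by omega)).mpr hjp
        have hjd : j ≤ d := by
          have h1 : d + 1 ≤ conj π j := by omega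
          have h2 : j ≤ π (d + 1) := (conj_galois π hπ j (d+1) hj1 (by omega)).mp h1
          have h3 : π (d + 1) ≤ d := by
            by_contra hc
            have := hd2 (d+1) (by omega)
            omega
          omega
        exact ⟨hj1, hjd, by omega⟩
    rw [hset, ncard_Icc_nat]
    omega

end L2
section Surj

lemma xCoord_spec_even (r : ℕ) (α c : ℕ → ℕ) (i : ℕ) (hp : α i % 2 = r % 2) :
    2 * xCoord r α c i = -(r : ℤ) + 2 * c i + α i + 2 := by
  rw [xCoord, if_pos hp]
  omega

lemma xCoord_spec_odd (r : ℕ) (α c : ℕ → ℕ) (i : ℕ) (hp : ¬ (α i % 2 = r % 2)) :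
    2 * xCoord r α c i = -(r : ℤ) + 2 * c i + α i + 1 := by
  rw [xCoord, if_neg hp]
  omega

lemma surj_lemma (n M r : ℕ) (hr : 0 < r) (hM : 2 * r ≤ M)
    (α c : ℕ → ℕ) (h : (α, c) ∈ Cset n M r) :
    invPart (xCoord r α c) (yCoord r α c) (len α) ∈ Aset n M r ∧
    (∀ i, angPart (invPart (xCoord r α c) (yCoord r α c) (len α)) i = α i) ∧
    (∀ i, colorOf r (invPart (xCoord r α c) (yCoord r α c) (len α)) i = c i) := by
  obtain ⟨⟨hαp, hcbd, hcmono, hczero⟩, hsz, hc1, hc2, hc3⟩ := h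
  simp only at hαp hcbd hcmono hczero hsz hc1 hc2 hc3
  set l := len α with hl
  set x := xCoord r α c with hx
  set y := yCoord r α c with hy
  -- basic facts
  have hα1 : ∀ i, 1 ≤ i → i ≤ l → 1 ≤ α i := by
    intro i h1 h2
    exact (conj_galois α hαp 1 i le_rfl h1).mp h2
  have hxy : ∀ i, x i + y i = (α i : ℤ) + 1 := by
    intro i
    rw [hy, yCoord, ← hx]
    ring
  -- positivity of x, y
  have hpos : ∀ i, 1 ≤ i → i ≤ l → 1 ≤ x i ∧ 1 ≤ y i := by
    intro i h1 h2
    have hb := hcbd i h1 h2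
    have hi := hc1 i h1 h2
    have hs := hxy i
    by_cases hp : α i % 2 = r % 2
    · rw [if_pos hp] at hi
      have hxe := xCoord_spec_even r α c i hp
      rw [← hx] at hxe
      rcases abs_cases (2 * (c i : ℤ) - r + 1) with ⟨he, _⟩ | ⟨he, _⟩ <;> omega
    · rw [if_neg hp] at hi
      have hxe := xCoord_spec_odd r α c i hp
      rw [← hx] at hxe
      rcases abs_cases (2 * (c i : ℤ) - r) with ⟨he, _⟩ | ⟨he, _⟩ <;> omega
  -- strict decrease
  have hdec : ∀ i, 1 ≤ i → i + 1 ≤ l → x (i+1) < x i ∧ y (i+1) < y i := by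
    intro i h1 h2
    have hg := hc2 i h1 h2
    have hs1 := hxy i
    have hs2 := hxy (i+1)
    by_cases hp1 : α i % 2 = r % 2 <;> by_cases hp2 : α (i+1) % 2 = r % 2
    · have e1 := xCoord_spec_even r α c i hp1
      have e2 := xCoord_spec_even r α c (i+1) hp2
      rw [← hx] at e1 e2
      rw [if_pos (by omega)] at hg
      rcases abs_cases (2 * ((c i : ℤ) - (c (i+1) : ℤ))) with ⟨he, _⟩ | ⟨he, _⟩ <;> omega
    · have e1 := xCoord_spec_even r α c i hp1
      have e2 := xCoord_spec_odd r α c (i+1) hp2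
      rw [← hx] at e1 e2
      rw [if_neg (by omega), if_neg (by omega)] at hg
      rcases abs_cases (2 * ((c i : ℤ) - (c (i+1) : ℤ)) + 1) with ⟨he, _⟩ | ⟨he, _⟩ <;> omega
    · have e1 := xCoord_spec_odd r α c i hp1
      have e2 := xCoord_spec_even r α c (i+1) hp2
      rw [← hx] at e1 e2
      rw [if_neg (by omega), if_pos (by omega)] at hg
      rcases abs_cases (2 * ((c i : ℤ) - (c (i+1) : ℤ)) - 1) with ⟨he, _⟩ | ⟨he, _⟩ <;> omega
    · have e1 := xCoord_spec_odd r α c i hp1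
      have e2 := xCoord_spec_odd r α c (i+1) hp2
      rw [← hx] at e1 e2
      rw [if_pos (by omega)] at hg
      rcases abs_cases (2 * ((c i : ℤ) - (c (i+1) : ℤ))) with ⟨he, _⟩ | ⟨he, _⟩ <;> omega
  have hang : Angles x y l :=
    ⟨fun i h1 h2 => (hpos i h1 h2).1, fun i h1 h2 => (hpos i h1 h2).2,
     fun i h1 h2 => (hdec i h1 h2).1, fun i h1 h2 => (hdec i h1 h2).2⟩
  set P := invPart x y l with hP
  have hPp : IsPartition P := isPartition_invPart hang
  have hPd : durfee P = l := durfee_invPart hang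
  -- rank values
  have hrank : ∀ i, 1 ≤ i → i ≤ l → rank P i = x i - y i := by
    intro i h1 h2
    rw [rank, invPart_low hang h1 h2, conj_invPart_low hang h1 h2]
    ring
  -- size
  have hsize : size P = n := by
    have h1 := size_invPart hang
    rw [← hP] at h1
    have h2 : size α = ∑ j ∈ Finset.Icc 1 l, α j := part_sum α hαp l le_rfl
    have h3 : (∑ m ∈ Finset.Icc 1 l, (x m + y m - 1)) = ∑ j ∈ Finset.Icc 1 l, (α j : ℤ) := by
      apply Finset.sum_congr rfl
      intro j _
      have := hxy j
      omega
    have h4 : ((∑ j ∈ Finset.Icc 1 l, α j : ℕ) : ℤ) = ∑ j ∈ Finset.Icc 1 l, (α j : ℤ) := by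
      push_cast; rfl
    omega
  -- membership in Aset
  have hmem : P ∈ Aset n M r := by
    refine ⟨hPp, hsize, ?_⟩
    intro i h1 h2
    rw [hPd] at h2
    rw [hrank i h1 h2]
    have hb := hcbd i h1 h2
    have hs := hxy i
    by_cases hp : α i % 2 = r % 2
    · have hxe := xCoord_spec_even r α c i hp
      rw [← hx] at hxe
      have h3 : ¬ (M % 2 = 0 ∧ c i = M / 2 - 1) := by
        rintro ⟨hm0, hceq⟩
        exact hc3 i h1 h2 hm0 hceq hp
      omega
    · have hxe := xCoord_spec_odd r α c i hp
      rw [← hx] at hxe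
      omega
  -- angPart recovery
  have hangP : ∀ i, angPart P i = α i := by
    intro i
    rw [angPart, hPd]
    by_cases hi : 1 ≤ i ∧ i ≤ l
    · rw [if_pos hi]
      have e1 := invPart_low hang hi.1 hi.2
      have e2 := conj_invPart_low hang hi.1 hi.2
      have hs := hxy i
      have hp := hpos i hi.1 hi.2
      rw [← hP] at e1 e2
      omega
    · rw [if_neg hi]
      rcases Nat.eq_zero_or_pos i with rfl | h1
      · exact (hαp.1).symm
      · exact (part_eq_zero_of_len_lt α hαp i (by omega)).symm
  refine ⟨hmem, hangP, ?_⟩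
  -- colorOf recovery
  intro i
  rw [colorOf, hPd]
  by_cases hi : 1 ≤ i ∧ i ≤ l
  · rw [if_pos hi, hangP i, hrank i hi.1 hi.2]
    have hs := hxy i
    by_cases hp : α i % 2 = r % 2
    · rw [if_pos hp]
      have hxe := xCoord_spec_even r α c i hp
      rw [← hx] at hxe
      omega
    · rw [if_neg hp]
      have hxe := xCoord_spec_odd r α c i hp
      rw [← hx] at hxe
      omega
  · rw [if_neg hi]
    rcases Nat.eq_zero_or_pos i with rfl | h1
    · exact (hczero 0 (Or.inl rfl)).symm
    · exact (hczero i (Or.inr (by omega))).symm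

end Surj
section Fwd

lemma invPart_congr (x y x' y' : ℕ → ℤ) (l : ℕ)
    (hx : ∀ i, 1 ≤ i → i ≤ l → x i = x' i) (hy : ∀ i, 1 ≤ i → i ≤ l → y i = y' i) :
    invPart x y l = invPart x' y' l := by
  funext i
  rw [invPart, invPart]
  by_cases hi : 1 ≤ i ∧ i ≤ l
  · rw [if_pos hi, if_pos hi, hx i hi.1 hi.2]
  · rw [if_neg hi, if_neg hi]
    by_cases h0 : i = 0
    · rw [if_pos h0, if_pos h0]
    · rw [if_neg h0, if_neg h0]
      congr 1
      ext j
      simp only [Set.mem_setOf_eq]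
      constructor
      · rintro ⟨h1, h2, h3⟩; exact ⟨h1, h2, by rw [← hy j h1 h2]; exact h3⟩
      · rintro ⟨h1, h2, h3⟩; exact ⟨h1, h2, by rw [hy j h1 h2]; exact h3⟩

lemma fwd_lemma (n M r : ℕ) (hr : 0 < r) (hM : 2 * r ≤ M)
    (π : ℕ → ℕ) (h : π ∈ Aset n M r) :
    (angPart π, colorOf r π) ∈ Cset n M r ∧
    invPart (xCoord r (angPart π) (colorOf r π)) (yCoord r (angPart π) (colorOf r π))
      (len (angPart π)) = π := by
  obtain ⟨hπp, hsz, hrk⟩ := h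
  set d := durfee π with hd
  have hang := partition_angles π hπp
  have hinv := invPart_of_partition π hπp
  rw [← hd] at hang hinv
  set X : ℕ → ℤ := fun i => (π i : ℤ) - i + 1 with hX
  set Y : ℕ → ℤ := fun i => (conj π i : ℤ) - i + 1 with hY
  set β := angPart π with hβd
  set γ := colorOf r π with hγd
  -- values of β
  have hXv : ∀ i, 1 ≤ i → i ≤ d → 1 ≤ X i ∧ 1 ≤ Y i := by
    intro i h1 h2
    exact ⟨hang.hx1 i h1 h2, hang.hy1 i h1 h2⟩
  have hβv : ∀ i, 1 ≤ i → i ≤ d → (β i : ℤ) = X i + Y i - 1 := by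
    intro i h1 h2
    have := hXv i h1 h2
    rw [hβd, angPart, ← hd, if_pos ⟨h1, h2⟩]
    simp only [hX, hY] at *
    omega
  have hβ0 : ∀ i, i = 0 ∨ d < i → β i = 0 := by
    intro i hi
    rw [hβd, angPart, ← hd, if_neg (by omega)]
  -- β is a partition
  have hβmono : ∀ i j, 1 ≤ i → i ≤ j → β j ≤ β i := by
    intro i j h1 hij
    rcases le_or_gt j d with hjd | hjd
    · have e1 := hβv i h1 (le_trans hij hjd)
      have e2 := hβv j (le_trans h1 hij) hjd
      have m1 := seq_mono X d hang.hxd i j h1 hij hjd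
      have m2 := seq_mono Y d hang.hyd i j h1 hij hjd
      omega
    · rw [hβ0 j (Or.inr hjd)]
      omega
  have hβpart : IsPartition β := ⟨hβ0 0 (Or.inl rfl), hβmono, ⟨d + 1, fun j hj => hβ0 j (Or.inr (by omega))⟩⟩
  have hβpos : ∀ i, 1 ≤ i → i ≤ d → 1 ≤ β i := by
    intro i h1 h2
    have := hβv i h1 h2
    have := hXv i h1 h2
    omega
  -- length of β
  have hlen : len β = d := by
    rw [len, conj]
    have : {j : ℕ | 1 ≤ j ∧ 1 ≤ β j} = Set.Icc 1 d := by
      ext j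
      simp only [Set.mem_setOf_eq, Set.mem_Icc]
      constructor
      · rintro ⟨h1, h2⟩
        refine ⟨h1, ?_⟩
        by_contra hc
        rw [hβ0 j (Or.inr (by omega))] at h2
        omega
      · rintro ⟨h1, h2⟩
        exact ⟨h1, hβpos j h1 h2⟩
    rw [this, ncard_Icc_nat]
    omega
  -- size of β
  have hsizeβ : size β = n := by
    have h1 : size β = ∑ j ∈ Finset.Icc 1 d, β j := part_sum β hβpart d (by omega)
    have h2 := size_invPart hang
    rw [hinv] at h2
    have h3 : (∑ m ∈ Finset.Icc 1 d, (X m + Y m - 1)) = ∑ j ∈ Finset.Icc 1 d, (β j : ℤ) := by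
      apply Finset.sum_congr rfl
      intro j hj
      simp only [Finset.mem_Icc] at hj
      exact (hβv j hj.1 hj.2).symm
    have h4 : ((∑ j ∈ Finset.Icc 1 d, β j : ℕ) : ℤ) = ∑ j ∈ Finset.Icc 1 d, (β j : ℤ) := by
      push_cast; rfl
    omega
  -- the color values
  have hrkv : ∀ i, 1 ≤ i → i ≤ d → rank π i = X i - Y i := by
    intro i h1 h2
    rw [rank]
    simp only [hX, hY]
    ring
  have hγeq : ∀ i, 1 ≤ i → i ≤ d →
      2 * (γ i : ℤ) = rank π i + r - (if β i % 2 = r % 2 then 1 else 0) := by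
    intro i h1 h2
    have hbv := hβv i h1 h2
    have hxv := hXv i h1 h2
    have hrv := hrkv i h1 h2
    have hbb := hrk i h1 h2
    rw [hγd, colorOf, ← hd, if_pos ⟨h1, h2⟩, ← hβd]
    rw [rank] at hrv hbb ⊢
    simp only [hX, hY] at *
    split_ifs with hp <;> omega
  have hγ0 : ∀ i, i = 0 ∨ d < i → γ i = 0 := by
    intro i hi
    rw [hγd, colorOf, ← hd, if_neg (by omega)]
  constructor
  · -- membership in Cset
    refine ⟨⟨hβpart, ?_, ?_, ?_⟩, hsizeβ, ?_, ?_, ?_⟩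
    · -- color bounds
      intro i h1 h2
      simp only at h2 ⊢
      rw [hlen] at h2
      have he := hγeq i h1 h2
      have hbb := hrk i h1 h2
      split_ifs at he <;> omega
    · -- monotone colors on equal parts (vacuous by strict decrease)
      intro i h1 h2 heq
      simp only at h2 heq ⊢
      rw [hlen] at h2
      have e1 := hβv i h1 (by omega)
      have e2 := hβv (i+1) (by omega) h2
      have m1 := hang.hxd i h1 h2
      have m2 := hang.hyd i h1 h2
      omega
    · -- colors zero outside
      intro i hi
      simp only at hi ⊢
      rw [hlen] at hi
      exact hγ0 i hi
    · -- condition (i)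
      intro i h1 h2
      simp only at h2 ⊢
      rw [hlen] at h2
      have he := hγeq i h1 h2
      have hbv := hβv i h1 h2
      have hxv := hXv i h1 h2
      have hrv := hrkv i h1 h2
      split_ifs with hp
      · rw [if_pos hp] at he
        rcases abs_cases (2 * (γ i : ℤ) - r + 1) with ⟨hh, _⟩ | ⟨hh, _⟩ <;> omega
      · rw [if_neg hp] at he
        rcases abs_cases (2 * (γ i : ℤ) - r) with ⟨hh, _⟩ | ⟨hh, _⟩ <;> omega
    · -- condition (ii)
      intro i h1 h2
      simp only at h2 ⊢
      rw [hlen] at h2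
      have he1 := hγeq i h1 (by omega)
      have he2 := hγeq (i+1) (by omega) h2
      have e1 := hβv i h1 (by omega)
      have e2 := hβv (i+1) (by omega) h2
      have r1 := hrkv i h1 (by omega)
      have r2 := hrkv (i+1) (by omega) h2
      have m1 := hang.hxd i h1 h2
      have m2 := hang.hyd i h1 h2
      by_cases hp1 : β i % 2 = r % 2 <;> by_cases hp2 : β (i+1) % 2 = r % 2
      · rw [if_pos hp1] at he1
        rw [if_pos hp2] at he2
        rw [if_pos (by omega)]
        rcases abs_cases (2 * ((γ i : ℤ) - (γ (i+1) : ℤ))) with ⟨hh, _⟩ | ⟨hh, _⟩ <;> omega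
      · rw [if_pos hp1] at he1
        rw [if_neg hp2] at he2
        rw [if_neg (by omega), if_neg (by omega)]
        rcases abs_cases (2 * ((γ i : ℤ) - (γ (i+1) : ℤ)) + 1) with ⟨hh, _⟩ | ⟨hh, _⟩ <;> omega
      · rw [if_neg hp1] at he1
        rw [if_pos hp2] at he2
        rw [if_neg (by omega), if_pos (by omega)]
        rcases abs_cases (2 * ((γ i : ℤ) - (γ (i+1) : ℤ)) - 1) with ⟨hh, _⟩ | ⟨hh, _⟩ <;> omega
      · rw [if_neg hp1] at he1
        rw [if_neg hp2] at he2
        rw [if_pos (by omega)]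
        rcases abs_cases (2 * ((γ i : ℤ) - (γ (i+1) : ℤ))) with ⟨hh, _⟩ | ⟨hh, _⟩ <;> omega
    · -- condition (iii)
      intro i h1 h2 hM0 hγv
      simp only at h2 hγv ⊢
      rw [hlen] at h2
      have he := hγeq i h1 h2
      have hbb := hrk i h1 h2
      intro hp
      rw [if_pos hp] at he
      omega
  · -- inverse identity
    rw [hlen]
    rw [invPart_congr (xCoord r β γ) (yCoord r β γ) X Y d ?_ ?_]
    · exact hinv
    · intro i h1 h2
      have he := hγeq i h1 h2
      have hbv := hβv i h1 h2
      have hrv := hrkv i h1 h2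
      have hbb := hrk i h1 h2
      rw [xCoord]
      split_ifs with hp
      · rw [if_pos hp] at he
        omega
      · rw [if_neg hp] at he
        omega
    · intro i h1 h2
      have he := hγeq i h1 h2
      have hbv := hβv i h1 h2
      have hrv := hrkv i h1 h2
      have hbb := hrk i h1 h2
      rw [yCoord, xCoord]
      split_ifs with hp
      · rw [if_pos hp] at he
        omega
      · rw [if_neg hp] at he
        omega

end Fwd
theorem stmt19 (n M r : ℕ) (hr : 0 < r) (hM : 2 * r ≤ M)
    (α c : ℕ → ℕ) (h : (α, c) ∈ Cset n M r) :
    invPart (xCoord r α c) (yCoord r α c) (len α) ∈ Aset n M r ∧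
    (∀ i, angPart (invPart (xCoord r α c) (yCoord r α c) (len α)) i = α i) ∧
    (∀ i, colorOf r (invPart (xCoord r α c) (yCoord r α c) (len α)) i = c i) ∧
    Set.BijOn (fun π => (angPart π, colorOf r π)) (Aset n M r) (Cset n M r) := by
  obtain ⟨hA, hang, hcol⟩ := surj_lemma n M r hr hM α c h
  refine ⟨hA, hang, hcol, ?_, ?_, ?_⟩
  · exact fun π hπ => (fwd_lemma n M r hr hM π hπ).1
  · intro π₁ h₁ π₂ h₂ heq
    have e₁ := (fwd_lemma n M r hr hM π₁ h₁).2
    have e₂ := (fwd_lemma n M r hr hM π₂ h₂).2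
    simp only [Prod.mk.injEq] at heq
    rw [← e₁, ← e₂, heq.1, heq.2]
  · intro p hp
    have hp' : (p.1, p.2) ∈ Cset n M r := by
      rwa [Prod.mk.eta]
    obtain ⟨hA', hang', hcol'⟩ := surj_lemma n M r hr hM p.1 p.2 hp'
    exact ⟨_, hA', Prod.ext (funext hang') (funext hcol')⟩
end
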